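/- Let N ≥ 2, let G be an N×N symmetric positive semidefinite real matrix with G e = 0 and such that uᵀGu = 0 implies u is a scalar multiple of e, let σ > 0, and let f : ℝ^N → ℝ be differentiable and satisfy the strong convexity inequality f(x) ≥ f(y) + ⟨∇f(y), x − y⟩ + (σ/2) (‖x − y‖*_G)² for all x, y ∈ S. Suppose f attains its minimum value f* over S. Then ∇f(y)ᵀ G ∇f(y) ≥ 2σ (f(y) − f*) for every y ∈ S. -/

import Mathlib

/-!
Let `x⋆ ∈ S` attain `f⋆`, and put `v = x⋆ - y ∈ S`, `g = ∇f(y)`. Strong convexity at the pair `(x⋆, y)` gives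
`f⋆ ≥ f(y) + ⟨g, v⟩ + σ/2 · ‖v‖*²`, and the Cauchy–Schwarz inequality for the dual pair,
`-⟨g, v⟩ ≤ √(gᵀGg) · ‖v‖*`, turns this into
`f(y) - f⋆ ≤ √(gᵀGg) t - σ t²/2 ≤ gᵀGg / (2σ)` with `t = ‖v‖*`.
That inequality needs `‖·‖*` to be finite on `S`: since `ker G ⊆ ℝe`, the subspace `S = e^⊥`
lies in `(ker G)^⊥ = range G`, and for `v = Gw` one has `⟨v, u⟩ = wᵀGu ≤ √(wᵀGw) √(uᵀGu)`.
-/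

/-- The gradient of `f : (Fin N → ℝ) → ℝ` at `x`, as a vector. -/
noncomputable def gradVec (N : ℕ) (f : (Fin N → ℝ) → ℝ) (x : Fin N → ℝ) :
    Fin N → ℝ :=
  fun i => fderiv ℝ f x (Pi.single i 1)

open Matrix

namespace Matrix

variable {ι : Type*} [Fintype ι]

lemma sum_sum_mul_mul_eq_dotProduct_mulVec (G : Matrix ι ι ℝ) (u : ι → ℝ) :
    ∑ i, ∑ j, u i * G i j * u j = u ⬝ᵥ G *ᵥ u := by
  classical
  rw [← toBilin'_apply, toBilin'_apply']

variable {G : Matrix ι ι ℝ}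

lemma PosSemidef.dotProduct_mulVec_self_nonneg (hG : G.PosSemidef) (u : ι → ℝ) :
    0 ≤ u ⬝ᵥ G *ᵥ u :=
  star_trivial u ▸ hG.dotProduct_mulVec_nonneg u

lemma PosSemidef.dotProduct_mulVec_sq_le (hG : G.PosSemidef) (x y : ι → ℝ) :
    (x ⬝ᵥ G *ᵥ y) ^ 2 ≤ (x ⬝ᵥ G *ᵥ x) * (y ⬝ᵥ G *ᵥ y) := by
  classical
  have hsymm : (toBilin' G).IsSymm :=
    isSymm_toBilin'_iff_isSymm.2 (isHermitian_iff_isSymm.1 hG.isHermitian)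
  simpa only [toBilin'_apply'] using (toBilin' G).apply_sq_le_of_symm
    (fun u => by simpa only [toBilin'_apply'] using hG.dotProduct_mulVec_self_nonneg u)
    (LinearMap.BilinForm.isSymm_iff.1 hsymm) x y

lemma IsHermitian.exists_mulVec_eq [DecidableEq ι] (hG : G.IsHermitian) {v : ι → ℝ}
    (hv : ∀ k, G *ᵥ k = 0 → v ⬝ᵥ k = 0) : ∃ w, G *ᵥ w = v := by
  set T := toEuclideanLin G
  have hT : T.IsSymmetric := isSymmetric_toEuclideanLin_iff.2 hG
  have hmem : WithLp.toLp 2 v ∈ (LinearMap.ker T)ᗮ := by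
    rw [Submodule.mem_orthogonal']
    intro k hk
    have hGk : G *ᵥ k.ofLp = 0 := congrArg WithLp.ofLp hk
    rw [EuclideanSpace.inner_eq_star_dotProduct, star_trivial, dotProduct_comm]
    exact hv k.ofLp hGk
  rw [← hT.orthogonal_range, Submodule.orthogonal_orthogonal] at hmem
  obtain ⟨w, hw⟩ := hmem
  exact ⟨w.ofLp, congrArg WithLp.ofLp hw⟩

end Matrix

section DualNorm

variable {ι : Type*} [Fintype ι] {G : Matrix ι ι ℝ}

/-- `‖v‖*_G`. It is finite only for `v` in the range of `G`; elsewhere the set is unbounded and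
`sSup` takes the junk value `0`. -/
noncomputable def dualNorm (G : Matrix ι ι ℝ) (v : ι → ℝ) : ℝ :=
  sSup {r : ℝ | ∃ u : ι → ℝ, u ⬝ᵥ G *ᵥ u ≤ 1 ∧ r = v ⬝ᵥ u}

lemma dotProduct_le_sqrt_of_mulVec_eq (hG : G.PosSemidef) {v w u : ι → ℝ} (hw : G *ᵥ w = v)
    (hu : u ⬝ᵥ G *ᵥ u ≤ 1) : v ⬝ᵥ u ≤ √(w ⬝ᵥ G *ᵥ w) := by
  have hvu : v ⬝ᵥ u = w ⬝ᵥ G *ᵥ u := by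
    rw [← hw, dotProduct_comm, dotProduct_mulVec, ← mulVec_transpose,
      (isHermitian_iff_isSymm.1 hG.isHermitian).eq, dotProduct_comm]
  calc v ⬝ᵥ u = w ⬝ᵥ G *ᵥ u := hvu
    _ ≤ √((w ⬝ᵥ G *ᵥ w) * (u ⬝ᵥ G *ᵥ u)) :=
      Real.le_sqrt_of_sq_le (hG.dotProduct_mulVec_sq_le w u)
    _ = √(w ⬝ᵥ G *ᵥ w) * √(u ⬝ᵥ G *ᵥ u) :=
      Real.sqrt_mul' _ (hG.dotProduct_mulVec_self_nonneg u)
    _ ≤ √(w ⬝ᵥ G *ᵥ w) :=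
      mul_le_of_le_one_right (Real.sqrt_nonneg _) (Real.sqrt_le_one.2 hu)

lemma le_dualNorm_of_mulVec_eq (hG : G.PosSemidef) {v w u : ι → ℝ} (hw : G *ᵥ w = v)
    (hu : u ⬝ᵥ G *ᵥ u ≤ 1) : v ⬝ᵥ u ≤ dualNorm G v :=
  le_csSup ⟨_, by rintro _ ⟨u', hu', rfl⟩; exact dotProduct_le_sqrt_of_mulVec_eq hG hw hu'⟩
    ⟨u, hu, rfl⟩

lemma dotProduct_const_eq_zero_of_sum_eq_zero {v : ι → ℝ} (hv : ∑ i, v i = 0) (c : ℝ) :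
    v ⬝ᵥ (fun _ => c) = 0 := by
  rw [dotProduct, ← Finset.sum_mul, hv, zero_mul]

lemma exists_mulVec_eq_of_sum_eq_zero (hG : G.PosSemidef)
    (hker : ∀ u, u ⬝ᵥ G *ᵥ u = 0 → ∃ c : ℝ, u = fun _ => c) {v : ι → ℝ} (hv : ∑ i, v i = 0) :
    ∃ w, G *ᵥ w = v := by
  classical
  refine hG.isHermitian.exists_mulVec_eq fun k hk => ?_
  obtain ⟨c, rfl⟩ := hker k (by rw [hk, dotProduct_zero])
  exact dotProduct_const_eq_zero_of_sum_eq_zero hv c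

lemma dotProduct_le_sqrt_mul_dualNorm (hG : G.PosSemidef)
    (hker : ∀ u, u ⬝ᵥ G *ᵥ u = 0 → ∃ c : ℝ, u = fun _ => c) {v : ι → ℝ} (hv : ∑ i, v i = 0)
    (u : ι → ℝ) : v ⬝ᵥ u ≤ √(u ⬝ᵥ G *ᵥ u) * dualNorm G v := by
  obtain hq | hq := (hG.dotProduct_mulVec_self_nonneg u).lt_or_eq
  · obtain ⟨w, hw⟩ := exists_mulVec_eq_of_sum_eq_zero hG hker hv
    set s := √(u ⬝ᵥ G *ᵥ u)
    have hunit : (s⁻¹ • u) ⬝ᵥ G *ᵥ (s⁻¹ • u) ≤ 1 := by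
      simp only [mulVec_smul, smul_dotProduct, dotProduct_smul, smul_eq_mul]
      rw [← mul_assoc, ← mul_inv, Real.mul_self_sqrt hq.le, inv_mul_cancel₀ hq.ne']
    have h := le_dualNorm_of_mulVec_eq hG hw hunit
    rwa [dotProduct_smul, smul_eq_mul, inv_mul_le_iff₀ (Real.sqrt_pos.2 hq)] at h
  · obtain ⟨c, rfl⟩ := hker u hq.symm
    rw [dotProduct_const_eq_zero_of_sum_eq_zero hv, ← hq, Real.sqrt_zero, zero_mul]

end DualNorm

lemma fderiv_apply_eq_dotProduct_gradVec {N : ℕ} (f : (Fin N → ℝ) → ℝ) (x v : Fin N → ℝ) :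
    fderiv ℝ f x v = v ⬝ᵥ gradVec N f x := by
  conv_lhs => rw [pi_eq_sum_univ' v, map_sum]
  simp only [map_smul, smul_eq_mul, dotProduct, gradVec]

theorem stmt_11_general (N : ℕ) (G : Matrix (Fin N) (Fin N) ℝ)
    (hpsd : G.PosSemidef)
    (hker : ∀ u : Fin N → ℝ, (∑ i, ∑ j, u i * G i j * u j) = 0 →
      ∃ c : ℝ, u = fun _ => c)
    (σ : ℝ) (hσ : 0 < σ)
    (f : (Fin N → ℝ) → ℝ)
    (hsc : ∀ x y : Fin N → ℝ, (∑ i, x i = 0) → (∑ i, y i = 0) →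
      f y + fderiv ℝ f y (x - y) + (σ / 2) *
        (sSup {r : ℝ | ∃ u : Fin N → ℝ,
          (∑ i, ∑ j, u i * G i j * u j) ≤ 1 ∧
            r = ∑ i, (x i - y i) * u i}) ^ 2 ≤ f x)
    (fstar : ℝ)
    (hattain : ∃ xs : Fin N → ℝ, (∑ i, xs i = 0) ∧ f xs = fstar ∧
      ∀ x : Fin N → ℝ, (∑ i, x i = 0) → fstar ≤ f x)
    (y : Fin N → ℝ) (hy : ∑ i, y i = 0) :
    2 * σ * (f y - fstar) ≤
      ∑ i, ∑ j, gradVec N f y i * G i j * gradVec N f y j := by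
  simp only [sum_sum_mul_mul_eq_dotProduct_mulVec] at hker hsc ⊢
  obtain ⟨xs, hxs, rfl, -⟩ := hattain
  set g := gradVec N f y
  have hv : ∑ i, (xs - y) i = 0 := by
    simp only [Pi.sub_apply, Finset.sum_sub_distrib, hxs, hy, sub_zero]
  have hdecrease : f y + (xs - y) ⬝ᵥ g + σ / 2 * dualNorm G (xs - y) ^ 2 ≤ f xs := by
    have h := hsc xs y hxs hy
    -- the `sSup` in `hsc` unfolds to `dualNorm G (xs - y)`
    rwa [fderiv_apply_eq_dotProduct_gradVec] at h
  have hCS := dotProduct_le_sqrt_mul_dualNorm hpsd hker hv (-g)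
  simp only [dotProduct_neg, mulVec_neg, neg_dotProduct, neg_neg] at hCS
  have hQ := hpsd.dotProduct_mulVec_self_nonneg g
  nlinarith [Real.sq_sqrt hQ, sq_nonneg (√(g ⬝ᵥ G *ᵥ g) - σ * dualNorm G (xs - y))]

/-- For a function `f` that is `σ`-strongly convex on `S` with
respect to the dual norm `‖·‖*_G`, one has
`∇f(y)ᵀ G ∇f(y) ≥ 2σ (f(y) − f*)` for every `y ∈ S`. -/
theorem stmt_11 (N : ℕ) (hN : 2 ≤ N) (G : Matrix (Fin N) (Fin N) ℝ)
    (hsym : G.IsSymm) (hpsd : G.PosSemidef)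
    (hGe : G.mulVec (fun _ => (1 : ℝ)) = 0)
    (hker : ∀ u : Fin N → ℝ, (∑ i, ∑ j, u i * G i j * u j) = 0 →
      ∃ c : ℝ, u = fun _ => c)
    (σ : ℝ) (hσ : 0 < σ)
    (f : (Fin N → ℝ) → ℝ) (hdiff : Differentiable ℝ f)
    (hsc : ∀ x y : Fin N → ℝ, (∑ i, x i = 0) → (∑ i, y i = 0) →
      f y + fderiv ℝ f y (x - y) + (σ / 2) *
        (sSup {r : ℝ | ∃ u : Fin N → ℝ,
          (∑ i, ∑ j, u i * G i j * u j) ≤ 1 ∧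
            r = ∑ i, (x i - y i) * u i}) ^ 2 ≤ f x)
    (fstar : ℝ)
    (hattain : ∃ xs : Fin N → ℝ, (∑ i, xs i = 0) ∧ f xs = fstar ∧
      ∀ x : Fin N → ℝ, (∑ i, x i = 0) → fstar ≤ f x)
    (y : Fin N → ℝ) (hy : ∑ i, y i = 0) :
    2 * σ * (f y - fstar) ≤
      ∑ i, ∑ j, gradVec N f y i * G i j * gradVec N f y j :=
  stmt_11_general N G hpsd hker σ hσ f hsc fstar hattain y hy
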